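/- Let ν, λ₁, c > 0, ρ > 0, and z, w : ℝ → ℝ≥0 with w(s) ≤ ρ(1+|s|)⁴ for all s ≤ 0, and lim_{t→−∞}(1/|t|)∫_t^0 z(ζ)dζ = L with cL < νλ₁/2. Then ∫_{−∞}^0 w(s) exp(νλ₁ s + c∫_s^0 z(ζ) dζ) ds < ∞. -/
import Mathlib

open MeasureTheory Filter Set

lemma exp_mul_integrableOn_Iic {β : ℝ} (hβ : 0 < β) (t₀ : ℝ) :
    IntegrableOn (fun s : ℝ => Real.exp (β * s)) (Set.Iic t₀) volume := by
  have hcont : Continuous fun s : ℝ => Real.exp (β * s) :=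
    Real.continuous_exp.comp (continuous_const.mul continuous_id)
  refine integrableOn_Iic_of_intervalIntegral_norm_bounded
    (f := fun s : ℝ => Real.exp (β * s)) (a := fun i : ℝ => i) (l := atBot)
    (Real.exp (β * t₀) / β) t₀ (fun i => hcont.integrableOn_Ioc) tendsto_id ?_
  filter_upwards [eventually_le_atBot t₀] with i hi
  have h1 : (∫ x in i..t₀, ‖Real.exp (β * x)‖) = ∫ x in i..t₀, Real.exp (β * x) := by
    congr 1
    ext x
    exact Real.norm_of_nonneg (Real.exp_pos _).le
  rw [h1, intervalIntegral.integral_comp_mul_left Real.exp hβ.ne',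
    integral_exp, smul_eq_mul]
  rw [div_eq_inv_mul]
  have : Real.exp (β * t₀) - Real.exp (β * i) ≤ Real.exp (β * t₀) := by
    have := (Real.exp_pos (β * i)).le; linarith
  exact mul_le_mul_of_nonneg_left this (by positivity)

lemma poly_exp_eventually_le {β ρ : ℝ} (hβ : 0 < β) (hρ : 0 < ρ) :
    ∀ᶠ s : ℝ in atBot, ρ * (1 + |s|) ^ 4 * Real.exp (β * s) ≤ 1 := by
  have hT2 : Tendsto (fun x : ℝ => (β * x) ^ 4 * Real.exp (-(β * x))) atTop (nhds 0) :=
    (Real.tendsto_pow_mul_exp_neg_atTop_nhds_zero 4).comp (tendsto_id.const_mul_atTop hβ)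
  have hT3 : Tendsto (fun x : ℝ => (16 * ρ * β⁻¹ ^ 4) * ((β * x) ^ 4 * Real.exp (-(β * x))))
      atTop (nhds 0) := by
    have h := hT2.const_mul (16 * ρ * β⁻¹ ^ 4); rwa [mul_zero] at h
  have hT : Tendsto (fun x : ℝ => ρ * (1 + x) ^ 4 * Real.exp (-(β * x))) atTop (nhds 0) := by
    apply squeeze_zero' (t₀ := atTop)
    · filter_upwards [eventually_ge_atTop (0 : ℝ)] with x hx
      positivity
    · filter_upwards [eventually_ge_atTop (1 : ℝ)] with x hx
      have h1 : (1 + x) ^ 4 ≤ (2 * x) ^ 4 := by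
        apply pow_le_pow_left₀ (by linarith) (by linarith)
      have h2 : ρ * (1 + x) ^ 4 ≤ 16 * ρ * β⁻¹ ^ 4 * (β * x) ^ 4 := by
        have : (16 : ℝ) * ρ * β⁻¹ ^ 4 * (β * x) ^ 4 = ρ * (2 * x) ^ 4 := by
          field_simp; ring
        rw [this]
        exact mul_le_mul_of_nonneg_left h1 hρ.le
      calc ρ * (1 + x) ^ 4 * Real.exp (-(β * x))
          ≤ 16 * ρ * β⁻¹ ^ 4 * (β * x) ^ 4 * Real.exp (-(β * x)) :=
            mul_le_mul_of_nonneg_right h2 (Real.exp_pos _).le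
        _ = 16 * ρ * β⁻¹ ^ 4 * ((β * x) ^ 4 * Real.exp (-(β * x))) := by ring
    · exact hT3
  have hev : ∀ᶠ x : ℝ in atTop, ρ * (1 + x) ^ 4 * Real.exp (-(β * x)) ≤ 1 :=
    (hT.eventually (gt_mem_nhds one_pos)).mono fun x hx => hx.le
  have hcomp := tendsto_neg_atBot_atTop.eventually hev
  filter_upwards [hcomp, eventually_le_atBot (0 : ℝ)] with s hs hs0
  have habs : |s| = -s := abs_of_nonpos hs0
  have : ρ * (1 + -s) ^ 4 * Real.exp (-(β * -s)) ≤ 1 := hs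
  rw [habs]
  simpa [neg_mul, neg_neg, mul_neg] using this

/-- If w(s) ≤ ρ(1+|s|)⁴ for s ≤ 0 and the averages of z tend to L with cL < νλ₁/2,
then ∫_{−∞}^0 w(s) exp(νλ₁ s + c ∫_s^0 z) ds < ∞. -/
theorem poly_times_exp_weight_integrable (ν lam c L ρ : ℝ) (hν : 0 < ν)
    (hlam : 0 < lam) (hc : 0 < c) (hρ : 0 < ρ)
    (z w : ℝ → ℝ) (hz : ∀ t, 0 ≤ z t) (hw : ∀ t, 0 ≤ w t)
    (hwmeas : Measurable w)
    (hloc : LocallyIntegrable z volume)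
    (hwbound : ∀ s ≤ (0 : ℝ), w s ≤ ρ * (1 + |s|) ^ 4)
    (havg : Tendsto (fun t : ℝ => (1 / |t|) * ∫ ζ in t..(0 : ℝ), z ζ) atBot (nhds L))
    (hL : c * L < ν * lam / 2) :
    IntegrableOn
      (fun s : ℝ => w s * Real.exp (ν * lam * s + c * ∫ ζ in s..(0 : ℝ), z ζ))
      (Set.Iic (0 : ℝ)) volume := by
  set F : ℝ → ℝ := fun s => ∫ ζ in s..(0 : ℝ), z ζ with hF
  have hzint : ∀ a b : ℝ, IntervalIntegrable z volume a b := fun a b =>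
    (hloc.integrableOn_isCompact isCompact_uIcc).intervalIntegrable
  have hFcont : Continuous F := by
    have h := (intervalIntegral.continuous_primitive hzint 0).neg
    convert h using 1
    ext s
    simp [hF, intervalIntegral.integral_symm 0 s]
  have hGcont : Continuous fun s : ℝ => Real.exp (ν * lam * s + c * F s) :=
    Real.continuous_exp.comp (((continuous_const.mul continuous_id)).add
      (continuous_const.mul hFcont))
  have hmeas : AEStronglyMeasurable
      (fun s : ℝ => w s * Real.exp (ν * lam * s + c * F s)) volume :=
    (hwmeas.aestronglyMeasurable).mul hGcont.aestronglyMeasurable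
  -- constants
  set ε : ℝ := (ν * lam / 2 - c * L) / (2 * c) with hε
  have hεpos : 0 < ε := by
    apply div_pos (by linarith) (by linarith)
  set α : ℝ := ν * lam - c * (L + ε) with hα
  have hαpos : 0 < α := by
    have : c * (L + ε) = c * L + (ν * lam / 2 - c * L) / 2 := by
      rw [mul_add, hε]; field_simp
    rw [hα, this]; nlinarith
  set β : ℝ := α / 2 with hβ
  have hβpos : 0 < β := by positivity
  -- eventual bounds
  have hev1 : ∀ᶠ t : ℝ in atBot, (1 / |t|) * F t < L + ε :=
    havg.eventually (gt_mem_nhds (by linarith))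
  have hev2 := poly_exp_eventually_le hβpos hρ
  have hev : ∀ᶠ s : ℝ in atBot,
      ((1 / |s|) * F s < L + ε ∧ ρ * (1 + |s|) ^ 4 * Real.exp (β * s) ≤ 1) ∧ s < 0 :=
    (hev1.and hev2).and (eventually_lt_atBot 0)
  obtain ⟨t₀, ht₀⟩ := eventually_atBot.mp hev
  have ht₀0 : t₀ ≤ 0 := le_of_lt (ht₀ t₀ le_rfl).2
  -- integrability on Iic t₀
  have hIic : IntegrableOn
      (fun s : ℝ => w s * Real.exp (ν * lam * s + c * F s)) (Set.Iic t₀) volume := by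
    apply Integrable.mono' ((exp_mul_integrableOn_Iic hβpos t₀))
    · exact hmeas.restrict
    · filter_upwards [ae_restrict_mem measurableSet_Iic] with s hs
      have hs' := ht₀ s hs
      have hs0 : s < 0 := hs'.2
      have habs : |s| = -s := abs_of_nonpos hs0.le
      have hFs : F s ≤ (L + ε) * (-s) := by
        have h1 : (1 / |s|) * F s ≤ L + ε := hs'.1.1.le
        have h2 : (0:ℝ) < |s| := by rw [habs]; linarith
        have hne : |s| ≠ 0 := h2.ne'
        calc F s = |s| * (1 / |s| * F s) := by
              rw [← mul_assoc, mul_one_div, div_self hne, one_mul]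
          _ ≤ |s| * (L + ε) := mul_le_mul_of_nonneg_left h1 h2.le
          _ = (L + ε) * (-s) := by rw [habs]; ring
      have hexp : Real.exp (ν * lam * s + c * F s) ≤ Real.exp (α * s) := by
        apply Real.exp_le_exp.mpr
        have : c * F s ≤ c * ((L + ε) * (-s)) := mul_le_mul_of_nonneg_left hFs hc.le
        rw [hα]; nlinarith
      have hnorm : ‖w s * Real.exp (ν * lam * s + c * F s)‖
          = w s * Real.exp (ν * lam * s + c * F s) := by
        rw [Real.norm_eq_abs, abs_of_nonneg (mul_nonneg (hw s) (Real.exp_pos _).le)]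
      rw [hnorm]
      calc w s * Real.exp (ν * lam * s + c * F s)
          ≤ (ρ * (1 + |s|) ^ 4) * Real.exp (α * s) :=
            mul_le_mul (hwbound s hs0.le) hexp (Real.exp_pos _).le (by positivity)
        _ = (ρ * (1 + |s|) ^ 4 * Real.exp (β * s)) * Real.exp (β * s) := by
            have hab : Real.exp (α * s) = Real.exp (β * s) * Real.exp (β * s) := by
              rw [← Real.exp_add]; congr 1; rw [hβ]; ring
            rw [hab]; ring
        _ ≤ 1 * Real.exp (β * s) :=
            mul_le_mul_of_nonneg_right hs'.1.2 (Real.exp_pos _).le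
        _ = Real.exp (β * s) := one_mul _
  -- integrability on Icc t₀ 0
  have hIcc : IntegrableOn
      (fun s : ℝ => w s * Real.exp (ν * lam * s + c * F s)) (Set.Icc t₀ 0) volume := by
    obtain ⟨C, hC⟩ := (isCompact_Icc (a := t₀) (b := (0:ℝ))).exists_bound_of_continuousOn
      hGcont.continuousOn
    apply Measure.integrableOn_of_bounded (M := ρ * (1 + |t₀|) ^ 4 * C)
      (measure_Icc_lt_top).ne hmeas
    filter_upwards [ae_restrict_mem measurableSet_Icc] with s hs
    have hs0 : s ≤ 0 := hs.2
    have habs : |s| ≤ |t₀| := by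
      rw [abs_of_nonpos hs0, abs_of_nonpos ht₀0]; linarith [hs.1]
    have hwle : w s ≤ ρ * (1 + |t₀|) ^ 4 := by
      refine (hwbound s hs0).trans ?_
      apply mul_le_mul_of_nonneg_left (pow_le_pow_left₀ (by positivity) (by linarith) 4) hρ.le
    have hCs : Real.exp (ν * lam * s + c * F s) ≤ C := by
      have := hC s hs
      rwa [Real.norm_eq_abs, abs_of_pos (Real.exp_pos _)] at this
    rw [Real.norm_eq_abs, abs_of_nonneg (mul_nonneg (hw s) (Real.exp_pos _).le)]
    exact mul_le_mul hwle hCs (Real.exp_pos _).le (by positivity)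
  -- combine
  refine (hIic.union hIcc).mono_set fun x hx => ?_
  rcases le_or_gt x t₀ with h | h
  · exact Or.inl h
  · exact Or.inr ⟨h.le, hx⟩
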